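/- Let n be even, let 1 ≤ k ≤ n/2, and let r = (r_1,…,r_{2k}) be a strictly increasing 2k-tuple of integers with 1 ≤ r_1 < ⋯ < r_{2k} ≤ n. Then L_r(X_N) = (S(r) − n)/2 + W(r), where X_N = (1, 2, …, n). -/

import Mathlib

open Finset

-- The sign pattern `c_j` of the alternating form `L_r` for a tuple `r` given by its
-- (1-based) entries `r 1, …, r twok`: `c_1 = 1` and, for `1 ≤ j`, `c_{j+1} = c_j` if
-- `j ∈ {r_1,…,r_{twok}}` and `c_{j+1} = −c_j` otherwise.
open Classical in
noncomputable def signPatN (twok : ℕ) (r : ℕ → ℕ) : ℕ → ℤ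
  | 0 => 1
  | 1 => 1
  | (j + 2) =>
    if ∃ i ∈ Finset.Icc 1 twok, r i = j + 1 then signPatN twok r (j + 1)
    else -signPatN twok r (j + 1)

/-- The alternating linear form `L_r(X) = Σ_{j=1}^n c_j x_j`. -/
noncomputable def LformN (n twok : ℕ) (r : ℕ → ℕ) (X : ℕ → ℝ) : ℝ :=
  ∑ j ∈ Finset.Icc 1 n, (signPatN twok r j : ℝ) * X j

/-- Signature `S(r) = Σ_{j=1}^{2k} (−1)^{j+r_j}`. -/
def SigI (k : ℕ) (r : ℕ → ℕ) : ℤ :=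
  ∑ j ∈ Finset.Icc 1 (2 * k), (-1) ^ (j + r j)

/-- Weighted signature `W(r) = Σ_{j=1}^{2k} (−1)^{j+r_j} r_j`. -/
def WsigI (k : ℕ) (r : ℕ → ℕ) : ℤ :=
  ∑ j ∈ Finset.Icc 1 (2 * k), (-1) ^ (j + r j) * (r j : ℤ)

/-!
Away from the entries of `r` the sign pattern flips at every step, so
`c_{j+1} = (-1)^(j + #{i | r_i ≤ j})`. Summation by parts against `x_j = j`: the increment of
`c_{m+1} (2m+1)` is `-4 m c_m` when `m` is not an entry and `2 c_m` when it is, whence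
`4 L_r(X_N) = 1 - c_{n+1} (2n+1) + 2 Σ_i c_{r_i} (2 r_i + 1)`. For increasing `r` with values in
`[1, n]` one has `c_{r_i} = (-1)^(i + r_i)` and `c_{n+1} = (-1)^(n + 2k) = 1`.
-/

def entrySet (t : ℕ) (r : ℕ → ℕ) : Finset ℕ := (Icc 1 t).image r

section SignPattern

variable {t : ℕ} {r : ℕ → ℕ}

lemma mem_entrySet {x : ℕ} : x ∈ entrySet t r ↔ ∃ i ∈ Icc 1 t, r i = x := mem_image

lemma signPatN_add_two (j : ℕ) :
    signPatN t r (j + 2) = (if j + 1 ∈ entrySet t r then 1 else -1) * signPatN t r (j + 1) := by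
  rw [signPatN]
  by_cases h : ∃ i ∈ Icc 1 t, r i = j + 1
  · rw [if_pos h, if_pos (mem_entrySet.2 h), one_mul]
  · rw [if_neg h, if_neg (mt mem_entrySet.1 h), neg_one_mul]

lemma signPatN_succ_eq_neg_one_pow (j : ℕ) :
    signPatN t r (j + 1) = (-1) ^ (j + #{x ∈ Icc 1 j | x ∈ entrySet t r}) := by
  induction j with
  | zero => simp [signPatN]
  | succ j ih =>
    rw [signPatN_add_two, ih, card_filter, card_filter, sum_Icc_succ_top (by omega)]
    split_ifs <;> ring

lemma four_mul_LformN_id (m : ℕ) :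
    4 * LformN m t r (fun j => j) = 1 - signPatN t r (m + 1) * (2 * m + 1) +
      2 * ∑ x ∈ Icc 1 m with x ∈ entrySet t r, (signPatN t r x : ℝ) * (2 * x + 1) := by
  induction m with
  | zero => simp [LformN, signPatN]
  | succ m ih =>
    rw [LformN] at ih ⊢
    rw [sum_filter] at ih ⊢
    rw [sum_Icc_succ_top (by omega), sum_Icc_succ_top (by omega), signPatN_add_two]
    push_cast
    split_ifs <;> linear_combination ih

end SignPattern

section StrictMono

variable {t : ℕ} {r : ℕ → ℕ}

lemma one_le_apply_of_mem_Icc (hr : StrictMonoOn r (Set.Icc 1 t)) (h1 : 1 ≤ r 1) {i : ℕ}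
    (hi : i ∈ Icc 1 t) : 1 ≤ r i := by
  rw [mem_Icc] at hi
  exact h1.trans (hr.monotoneOn ⟨le_rfl, hi.1.trans hi.2⟩ hi hi.1)

lemma apply_le_of_mem_Icc (hr : StrictMonoOn r (Set.Icc 1 t)) {n : ℕ} (hn : r t ≤ n) {i : ℕ}
    (hi : i ∈ Icc 1 t) : r i ≤ n := by
  rw [mem_Icc] at hi
  exact (hr.monotoneOn hi ⟨hi.1.trans hi.2, le_rfl⟩ hi.2).trans hn

lemma filter_Icc_mem_entrySet (hr : StrictMonoOn r (Set.Icc 1 t)) (h1 : 1 ≤ r 1) (j : ℕ) :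
    {x ∈ Icc 1 j | x ∈ entrySet t r} = ({i ∈ Icc 1 t | r i ≤ j}).image r := by
  ext x
  simp only [mem_filter, mem_image, mem_entrySet]
  constructor
  · rintro ⟨hx, i, hi, rfl⟩
    exact ⟨i, ⟨hi, (mem_Icc.1 hx).2⟩, rfl⟩
  · rintro ⟨i, ⟨hi, hij⟩, rfl⟩
    exact ⟨mem_Icc.2 ⟨one_le_apply_of_mem_Icc hr h1 hi, hij⟩, i, hi, rfl⟩

lemma signPatN_succ_of_strictMonoOn (hr : StrictMonoOn r (Set.Icc 1 t)) (h1 : 1 ≤ r 1)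
    (j : ℕ) : signPatN t r (j + 1) = (-1) ^ (j + #{i ∈ Icc 1 t | r i ≤ j}) := by
  rw [signPatN_succ_eq_neg_one_pow, filter_Icc_mem_entrySet hr h1,
    card_image_of_injOn (hr.injOn.mono fun i hi => mem_Icc.1 (mem_filter.1 hi).1)]

lemma signPatN_apply (hr : StrictMonoOn r (Set.Icc 1 t)) (h1 : 1 ≤ r 1) {i : ℕ}
    (hi : i ∈ Icc 1 t) : signPatN t r (r i) = (-1) ^ (i + r i) := by
  rw [mem_Icc] at hi
  obtain ⟨m, hm⟩ : ∃ m, r i = m + 1 :=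
    Nat.exists_eq_add_of_le' (one_le_apply_of_mem_Icc hr h1 (mem_Icc.2 hi))
  have hbelow : {i' ∈ Icc 1 t | r i' ≤ m} = Ico 1 i := by
    ext i'
    simp only [mem_filter, mem_Icc, mem_Ico]
    constructor
    · rintro ⟨hi', hle⟩
      exact ⟨hi'.1, (hr.lt_iff_lt hi' hi).1 (by omega)⟩
    · rintro ⟨h1i', hlt⟩
      have hi' : i' ∈ Set.Icc 1 t := ⟨h1i', hlt.le.trans hi.2⟩
      have := hr hi' hi hlt
      exact ⟨hi', by omega⟩
  obtain ⟨i', rfl⟩ : ∃ i', i = i' + 1 := Nat.exists_eq_add_of_le' hi.1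
  rw [hm, signPatN_succ_of_strictMonoOn hr h1, hbelow, Nat.card_Ico, Nat.add_sub_cancel]
  ring

lemma filter_Icc_mem_entrySet_eq_image (hr : StrictMonoOn r (Set.Icc 1 t)) (h1 : 1 ≤ r 1)
    {n : ℕ} (hn : r t ≤ n) : {x ∈ Icc 1 n | x ∈ entrySet t r} = (Icc 1 t).image r := by
  rw [filter_Icc_mem_entrySet hr h1, filter_true_of_mem fun i => apply_le_of_mem_Icc hr hn]

lemma signPatN_succ_of_apply_le (hr : StrictMonoOn r (Set.Icc 1 t)) (h1 : 1 ≤ r 1)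
    {n : ℕ} (hn : r t ≤ n) : signPatN t r (n + 1) = (-1) ^ (n + t) := by
  rw [signPatN_succ_of_strictMonoOn hr h1, filter_true_of_mem fun i => apply_le_of_mem_Icc hr hn,
    Nat.card_Icc, Nat.add_sub_cancel]

end StrictMono

theorem stmt5_general (n k : ℕ) (hne : Even n)
    (r : ℕ → ℕ)
    (hinc : ∀ j : ℕ, 1 ≤ j → j < 2 * k → r j < r (j + 1))
    (hlb : 1 ≤ r 1) (hub : r (2 * k) ≤ n) :
    LformN n (2 * k) r (fun j => (j : ℝ)) =
      ((SigI k r : ℝ) - n) / 2 + (WsigI k r : ℝ) := by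
  have hr : StrictMonoOn r (Set.Icc 1 (2 * k)) :=
    strictMonoOn_of_lt_add_one Set.ordConnected_Icc fun j _ hj hj' => hinc j hj.1 hj'.2
  have hend : signPatN (2 * k) r (n + 1) = 1 := by
    rw [signPatN_succ_of_apply_le hr hlb hub]
    exact (hne.add (even_two_mul k)).neg_one_pow
  have hentries : ∑ x ∈ Icc 1 n with x ∈ entrySet (2 * k) r,
      (signPatN (2 * k) r x : ℝ) * (2 * x + 1) = 2 * WsigI k r + SigI k r := by
    rw [filter_Icc_mem_entrySet_eq_image hr hlb hub, sum_image (by simpa using hr.injOn), WsigI,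
      SigI]
    push_cast
    rw [mul_sum, ← sum_add_distrib]
    refine sum_congr rfl fun i hi => ?_
    rw [signPatN_apply hr hlb hi]
    push_cast
    ring
  have hfour := four_mul_LformN_id (t := 2 * k) (r := r) n
  rw [hend, hentries, Int.cast_one] at hfour
  linarith

theorem stmt5 (n k : ℕ) (hne : Even n) (hk1 : 1 ≤ k) (hk2 : k ≤ n / 2)
    (r : ℕ → ℕ)
    (hinc : ∀ j : ℕ, 1 ≤ j → j < 2 * k → r j < r (j + 1))
    (hlb : 1 ≤ r 1) (hub : r (2 * k) ≤ n) :
    LformN n (2 * k) r (fun j => (j : ℝ)) =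
      ((SigI k r : ℝ) - n) / 2 + (WsigI k r : ℝ) :=
  stmt5_general n k hne r hinc hlb hub
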